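/- arXiv:2211.09506 — 3 statements merged into one kernel-verified Lean document; each statement's English description precedes it below -/
import Mathlib

section
/- For every natural number n ≥ 2 and every quaternion q, the Fueter operator applied to the function q ↦ q̄^n satisfies D(q̄^n) = (2n+2) q̄^{n-1} + 2 q ∑_{k=0}^{n-2} q̄^{n-k-2} q^k. -/
/-! The differential of `x ↦ x̄ⁿ` at `q` is `v ↦ ∑ᵢ q̄ⁿ⁻¹⁻ⁱ v̄ q̄ⁱ`, and the conjugates of a quaternion by
`1, e1, e2, e3` add up to four times its real part: `a + e1 a ē1 + e2 a ē2 + e3 a ē3 = 2(a + ā)`.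
Hence `D(x̄ⁿ)(q) = 2 ∑ᵢ (q̄ⁿ⁻¹⁻ⁱ + qⁿ⁻¹⁻ⁱ) q̄ⁱ`. The first half is `2n q̄ⁿ⁻¹`; since `q` and `q̄`
commute, the second half is `2 q̄ⁿ⁻¹ + 2q ∑ₖ q̄ⁿ⁻²⁻ᵏ qᵏ`. -/

open scoped Quaternion

def e1 : ℍ[ℝ] := ⟨0,1,0,0⟩
def e2 : ℍ[ℝ] := ⟨0,0,1,0⟩
def e3 : ℍ[ℝ] := ⟨0,0,0,1⟩

/-- The Fueter operator `D = ∂_{q0} + e1 ∂_{q1} + e2 ∂_{q2} + e3 ∂_{q3}`. -/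
noncomputable def fueterD (f : ℍ[ℝ] → ℍ[ℝ]) (q : ℍ[ℝ]) : ℍ[ℝ] :=
  fderiv ℝ f q 1 + e1 * fderiv ℝ f q e1 + e2 * fderiv ℝ f q e2 + e3 * fderiv ℝ f q e3

instance Quaternion.instStarModule {R : Type*} [CommRing R] [Star R] [TrivialStar R] :
    StarModule R ℍ[R] :=
  ⟨fun r x => by ext <;> simp⟩

theorem fderiv_star_pow_apply {𝕜 𝔸 : Type*} [NontriviallyNormedField 𝕜] [StarRing 𝕜]
    [TrivialStar 𝕜] [NormedRing 𝔸] [NormedAlgebra 𝕜 𝔸] [StarRing 𝔸] [StarModule 𝕜 𝔸]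
    [ContinuousStar 𝔸] (n : ℕ) (x v : 𝔸) :
    fderiv 𝕜 (fun y => star y ^ n) x v =
      ∑ i ∈ Finset.range n, star x ^ (n - 1 - i) * star v * star x ^ i := by
  have h : HasFDerivAt (𝕜 := 𝕜) (fun y : 𝔸 => star y ^ n) _ x :=
    (hasFDerivAt_id x).star.fun_pow' n
  rw [h.fderiv]
  simp

theorem add_conj_e1_add_conj_e2_add_conj_e3 (a : ℍ[ℝ]) :
    a + e1 * a * star e1 + e2 * a * star e2 + e3 * a * star e3 = 2 * (a + star a) := by
  rw [two_mul]
  ext <;> simp [Quaternion.re_mul, Quaternion.imI_mul, Quaternion.imJ_mul, Quaternion.imK_mul]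
  all_goals simp [e1, e2, e3]
  ring

theorem fueterD_eq_of_fderiv_eq_sum_mul_star_mul {f : ℍ[ℝ] → ℍ[ℝ]} {q : ℍ[ℝ]} {ι : Type*}
    (s : Finset ι) (a b : ι → ℍ[ℝ]) (hf : ∀ v, fderiv ℝ f q v = ∑ i ∈ s, a i * star v * b i) :
    fueterD f q = ∑ i ∈ s, 2 * (a i + star (a i)) * b i := by
  simp only [fueterD, hf, Finset.mul_sum, ← Finset.sum_add_distrib]
  refine Finset.sum_congr rfl fun i _ => ?_
  rw [← add_conj_e1_add_conj_e2_add_conj_e3, star_one]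
  noncomm_ring

theorem Commute.sum_range_succ_pow_mul_pow {R : Type*} [Semiring R] {x y : R} (h : Commute x y)
    (m : ℕ) :
    ∑ i ∈ Finset.range (m + 1), y ^ (m - i) * x ^ i =
      x ^ m + y * ∑ k ∈ Finset.range m, x ^ (m - 1 - k) * y ^ k := by
  rw [Finset.sum_range_succ, Nat.sub_self, pow_zero, one_mul, add_comm, Finset.mul_sum,
    ← Finset.sum_range_reflect]
  congr 1
  refine Finset.sum_congr rfl fun k hk => ?_
  rw [show m - (m - 1 - k) = k + 1 by grind, pow_succ', mul_assoc, (h.pow_pow _ _).eq]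

/-- For `n ≥ 2` and every quaternion `q`,
`D(q̄^n) = (2n+2) q̄^{n-1} + 2 q ∑_{k=0}^{n-2} q̄^{n-k-2} q^k`. -/
theorem fueterD_conj_pow (n : ℕ) (hn : 2 ≤ n) (q : ℍ[ℝ]) :
    fueterD (fun x => (star x) ^ n) q =
      ((2 * n + 2 : ℕ) : ℍ[ℝ]) * (star q) ^ (n - 1) +
        2 * q * ∑ k ∈ Finset.range (n - 1), (star q) ^ (n - k - 2) * q ^ k := by
  obtain ⟨m, rfl⟩ : ∃ m, n = m + 1 := ⟨n - 1, by omega⟩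
  have hpow : ∀ i ∈ Finset.range (m + 1), star q ^ (m - i) * star q ^ i = star q ^ m :=
    fun i hi => by rw [← pow_add, Nat.sub_add_cancel (Finset.mem_range_succ_iff.mp hi)]
  have hexp : ∀ k, m + 1 - k - 2 = m - 1 - k := fun k => by omega
  rw [fueterD_eq_of_fderiv_eq_sum_mul_star_mul _ _ _ (fderiv_star_pow_apply (m + 1) q)]
  simp only [Nat.add_sub_cancel, star_pow, star_star, mul_assoc (2 : ℍ[ℝ]), ← Finset.mul_sum,
    add_mul, Finset.sum_add_distrib, Finset.sum_congr rfl hpow, Finset.sum_const,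
    Finset.card_range, (star_comm_self (x := q)).sum_range_succ_pow_mul_pow, hexp]
  push_cast [nsmul_eq_mul]
  noncomm_ring
end

section
/- For every natural number n ≥ 1 and every quaternion q, the conjugate Fueter operator applied to the function q ↦ q^n satisfies D̄(q^n) = 2( n q^{n-1} + ∑_{k=1}^{n} q^{n-k} q̄^{k-1} ). -/
open scoped Quaternion

/-- The conjugate Fueter operator `D̄ = ∂_{q0} - e1 ∂_{q1} - e2 ∂_{q2} - e3 ∂_{q3}`. -/
noncomputable def fueterDbar (f : ℍ[ℝ] → ℍ[ℝ]) (q : ℍ[ℝ]) : ℍ[ℝ] :=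
  fderiv ℝ f q 1 - e1 * fderiv ℝ f q e1 - e2 * fderiv ℝ f q e2 - e3 * fderiv ℝ f q e3

/-!
The derivative of `x ↦ x ^ n` at `q` is the sum of the sandwiches `v ↦ q ^ (n - 1 - i) * v * q ^ i`.
On a sandwich `v ↦ a * v * b` the operator `D̄` gives `(a - e1 a e1 - e2 a e2 - e3 a e3) b`,
and `-e a e = e a e⁻¹` fixes `re a` and the `e`-component of `a` while negating the other two,
so this is `4 (re a) b = 2 (a + ā) b`. For `a = q ^ (n - 1 - i)`, `b = q ^ i` the two halves add up to
`n q ^ (n - 1)` and, since `q` commutes with `q̄`, to the sum of the `q ^ (n - 1 - k) q̄ ^ k`.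
-/

theorem sub_basis_sandwich (a : ℍ[ℝ]) :
    a - e1 * a * e1 - e2 * a * e2 - e3 * a * e3 = 2 * (a + star a) := by
  rw [two_mul]
  ext <;> simp [Quaternion.re_mul, Quaternion.imI_mul, Quaternion.imJ_mul, Quaternion.imK_mul] <;>
    simp [e1, e2, e3]
  ring

theorem fueterDbar_eq_of_fderiv_eq_sum {ι : Type*} {f : ℍ[ℝ] → ℍ[ℝ]} {q : ℍ[ℝ]} {s : Finset ι}
    {a b : ι → ℍ[ℝ]} (h : ∀ v, fderiv ℝ f q v = ∑ i ∈ s, a i * v * b i) :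
    fueterDbar f q = 2 * ∑ i ∈ s, (a i + star (a i)) * b i := by
  simp only [fueterDbar, h, Finset.mul_sum, ← Finset.sum_sub_distrib]
  refine Finset.sum_congr rfl fun i _ => ?_
  rw [← mul_assoc (2 : ℍ[ℝ]), ← sub_basis_sandwich]
  noncomm_ring

theorem fderiv_pow_apply (n : ℕ) (q v : ℍ[ℝ]) :
    fderiv ℝ (fun x : ℍ[ℝ] => x ^ n) q v = ∑ i ∈ Finset.range n, q ^ (n - 1 - i) * v * q ^ i := by
  simp [fderiv_pow_ring', mul_assoc]

theorem fueterDbar_pow_general (n : ℕ) (q : ℍ[ℝ]) :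
    fueterDbar (fun x => x ^ n) q =
      2 * ((n : ℍ[ℝ]) * q ^ (n - 1) +
        ∑ k ∈ Finset.range n, q ^ (n - 1 - k) * (star q) ^ k) := by
  rw [fueterDbar_eq_of_fderiv_eq_sum (fderiv_pow_apply n q)]
  congr 1
  calc ∑ i ∈ Finset.range n, (q ^ (n - 1 - i) + star (q ^ (n - 1 - i))) * q ^ i
      = ∑ i ∈ Finset.range n, (q ^ (n - 1) + star q ^ (n - 1 - i) * q ^ i) := by
        refine Finset.sum_congr rfl fun i hi => ?_
        rw [add_mul, ← pow_add, star_pow, Nat.sub_add_cancel (by grind)]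
    _ = n * q ^ (n - 1) + ∑ k ∈ Finset.range n, q ^ (n - 1 - k) * star q ^ k := by
        rw [Finset.sum_add_distrib, Finset.sum_const, Finset.card_range, nsmul_eq_mul,
          ← Finset.sum_range_reflect]
        refine congrArg _ (Finset.sum_congr rfl fun i hi => ?_)
        rw [Nat.sub_sub_self (by grind)]
        exact ((star_comm_self (x := q)).pow_pow _ _).eq

/-- For `n ≥ 1` and every quaternion `q`,
`D̄(q^n) = 2 (n q^{n-1} + ∑_{k=1}^{n} q^{n-k} q̄^{k-1})`. -/
theorem fueterDbar_pow (n : ℕ) (hn : 1 ≤ n) (q : ℍ[ℝ]) :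
    fueterDbar (fun x => x ^ n) q =
      2 * ((n : ℍ[ℝ]) * q ^ (n - 1) +
        ∑ k ∈ Finset.range n, q ^ (n - 1 - k) * (star q) ^ k) :=
  fueterDbar_pow_general n q
end

section
/- Let p, s be quaternions with p ∉ [s]. With F_L(s,p) = -4(s - p̄) Q_{c,s}(p)^{-2}, Q_{c,s}(p)^{-1} = (s² - 2Re(p)s + |p|²)^{-1}, and the P₂-kernel P₂^L(s,p) = -F_L(s,p)·s + p0·F_L(s,p) (where p0 = Re(p)), one has the identity 4 Q_{c,s}(p)^{-1} = P₂^L(s,p) + p̲ · F_L(s,p), where p̲ = p - p0 is the imaginary part of p. -/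
open scoped Quaternion

/-- The 2-sphere `[s] = {x : Re x = Re s, ‖Im x‖ = ‖Im s‖}` associated to a quaternion. -/
def qSphere (s : ℍ[ℝ]) : Set ℍ[ℝ] := {x | x.re = s.re ∧ ‖x.im‖ = ‖s.im‖}

/-- `Q_{c,s}(p) = s² - 2 Re(p) s + |p|²`. -/
noncomputable def Qc (s p : ℍ[ℝ]) : ℍ[ℝ] :=
  s ^ 2 - 2 * ((p.re : ℝ) : ℍ[ℝ]) * s + ((Quaternion.normSq p : ℝ) : ℍ[ℝ])

/-- The left `F`-kernel `F_L(s,p) = -4 (s - p̄) Q_{c,s}(p)^{-2}`. -/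
noncomputable def FL (s p : ℍ[ℝ]) : ℍ[ℝ] := -4 * (s - star p) * ((Qc s p)⁻¹) ^ 2

/-- The `P₂`-kernel `P₂^L(s,p) = -F_L(s,p)·s + p0·F_L(s,p)` with `p0 = Re p`. -/
noncomputable def P2L (s p : ℍ[ℝ]) : ℍ[ℝ] :=
  -(FL s p * s) + ((p.re : ℝ) : ℍ[ℝ]) * FL s p

/-!
Expanding the kernels, the `Re p` terms cancel and the right-hand side is `p F_L - F_L s`.
Since `s` commutes with `Q = Q_{c,s}(p)`, this is `4 ((s - p̄) s - p (s - p̄)) Q⁻²`, and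
`(s - p̄) s - p (s - p̄) = s² - (p + p̄) s + p p̄ = Q` because `p + p̄ = 2 Re p` and `p p̄ = |p|²`.
Finally `Q Q⁻² = Q⁻¹`.
-/

theorem mul_inv_sq_eq_inv {G₀ : Type*} [GroupWithZero G₀] (a : G₀) : a * a⁻¹ ^ 2 = a⁻¹ := by
  simpa only [inv_inv, sq, mul_assoc] using inv_mul_mul_self a⁻¹

theorem commute_Qc (s p : ℍ[ℝ]) : Commute s (Qc s p) := by
  unfold Qc
  refine (((Commute.refl s).pow_right 2).sub_right ?_).add_right (Quaternion.coe_commute _ s).symm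
  exact ((Commute.ofNat_right s 2).mul_right (Quaternion.coe_commute _ s).symm).mul_right
    (Commute.refl s)

theorem sub_star_mul_sub_mul_sub_star (s p : ℍ[ℝ]) :
    (s - star p) * s - p * (s - star p) = Qc s p := by
  calc (s - star p) * s - p * (s - star p) = s ^ 2 - (star p + p) * s + p * star p := by
        noncomm_ring
    _ = Qc s p := by rw [Quaternion.star_add_self, Quaternion.self_mul_star, Qc, mul_assoc]

theorem P2L_add_im_mul_FL (s p : ℍ[ℝ]) :
    P2L s p + (p - ((p.re : ℝ) : ℍ[ℝ])) * FL s p = p * FL s p - FL s p * s := by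
  unfold P2L
  noncomm_ring

theorem mul_FL_sub_FL_mul (s p : ℍ[ℝ]) : p * FL s p - FL s p * s = 4 * (Qc s p)⁻¹ := by
  have hcomm : s * (Qc s p)⁻¹ ^ 2 = (Qc s p)⁻¹ ^ 2 * s :=
    ((commute_Qc s p).inv_right₀.pow_right 2).eq
  calc p * FL s p - FL s p * s
      = 4 * (((s - star p) * s - p * (s - star p)) * (Qc s p)⁻¹ ^ 2) := by
        rw [FL, mul_assoc _ _ s, ← hcomm]
        noncomm_ring
    _ = 4 * (Qc s p)⁻¹ := by rw [sub_star_mul_sub_mul_sub_star, mul_inv_sq_eq_inv]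

theorem four_Qc_inv_eq_P2L_add_im_mul_FL_general (s p : ℍ[ℝ]) :
    4 * (Qc s p)⁻¹ = P2L s p + (p - ((p.re : ℝ) : ℍ[ℝ])) * FL s p := by
  rw [P2L_add_im_mul_FL, mul_FL_sub_FL_mul]

/-- For `p ∉ [s]`: `4 Q_{c,s}(p)^{-1} = P₂^L(s,p) + p̲·F_L(s,p)`,
where `p̲ = p - Re p` is the imaginary part of `p`. -/
theorem four_Qc_inv_eq_P2L_add_im_mul_FL (s p : ℍ[ℝ]) (h : p ∉ qSphere s) :
    4 * (Qc s p)⁻¹ = P2L s p + (p - ((p.re : ℝ) : ℍ[ℝ])) * FL s p :=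
  four_Qc_inv_eq_P2L_add_im_mul_FL_general s p
end
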